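/- Let aggregate demand decompose as x(p,w) = x^m(p, w^m(p,w)) + x^f(p, w − w^m(p,w)) with all functions differentiable. Then the household pseudo-Slutsky matrix S̄(p,w) = ∂x/∂pᵀ + (∂x/∂w)xᵀ satisfies S̄ = S̄^m + S̄^f + U Vᵀ, where S̄^m and S̄^f are the individual pseudo-Slutsky matrices evaluated at (p, w^m) and (p, w − w^m), U = ∂x^m/∂w^m − ∂x^f/∂(w−w^m), and Vᵀ = ∂w^m/∂pᵀ + (∂w^m/∂w)(x^f)ᵀ − (1 − ∂w^m/∂w)(x^m)ᵀ. In particular, S̄ differs from the symmetric-candidate sum S̄^m + S̄^f by a matrix of rank at most one. -/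

import Mathlib

noncomputable section

/-- Price-derivative matrix of a demand function at `(p, w)`. -/
def priceDeriv {L : ℕ} (x : (Fin L → ℝ) → ℝ → (Fin L → ℝ))
    (p : Fin L → ℝ) (w : ℝ) : Matrix (Fin L) (Fin L) ℝ :=
  fun i j => fderiv ℝ (fun q => x q w i) p (Pi.single j 1)

/-- Income derivative of a demand function at `(p, w)`. -/
def incomeDeriv {L : ℕ} (x : (Fin L → ℝ) → ℝ → (Fin L → ℝ))
    (p : Fin L → ℝ) (w : ℝ) : Fin L → ℝ :=
  fun i => deriv (fun m => x p m i) w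

/-- The (pseudo-)Slutsky matrix `S = ∂x/∂pᵀ + (∂x/∂w)·xᵀ`. -/
def slutsky {L : ℕ} (x : (Fin L → ℝ) → ℝ → (Fin L → ℝ))
    (p : Fin L → ℝ) (w : ℝ) : Matrix (Fin L) (Fin L) ℝ :=
  fun i j => priceDeriv x p w i j + incomeDeriv x p w i * x p w j

/-- Price gradient of a scalar function of `(p, w)`. -/
def priceGrad {L : ℕ} (f : (Fin L → ℝ) → ℝ → ℝ)
    (p : Fin L → ℝ) (w : ℝ) : Fin L → ℝ :=
  fun j => fderiv ℝ (fun q => f q w) p (Pi.single j 1)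

/-- Income derivative of a scalar function of `(p, w)`. -/
def incomeGrad {L : ℕ} (f : (Fin L → ℝ) → ℝ → ℝ)
    (p : Fin L → ℝ) (w : ℝ) : ℝ :=
  deriv (fun m => f p m) w

/-! The chain rule applied to `x(p,w) = x^m(p, w^m) + x^f(p, w − w^m)` gives
`∂x/∂p = ∂x^m/∂p + ∂x^f/∂p + U (∂w^m/∂p)ᵀ` and
`∂x/∂w = (∂w^m/∂w) ∂x^m/∂w^m + (1 − ∂w^m/∂w) ∂x^f/∂(w − w^m)`.
Substituting into `S̄`, with `x = x^m + x^f`, everything beyond `S̄^m + S̄^f` collects into the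
outer product `U Vᵀ`, which has rank at most one. -/

section SharingRule

variable {E G : Type*} [NormedAddCommGroup E] [NormedSpace ℝ E]
  [NormedAddCommGroup G] [NormedSpace ℝ G]

theorem fderiv_prodMk_left_apply {F : E × ℝ → G} {p : E} {c : ℝ}
    (hF : DifferentiableAt ℝ F (p, c)) (v : E) :
    fderiv ℝ (fun q => F (q, c)) p v = fderiv ℝ F (p, c) (v, 0) := by
  have h : HasFDerivAt (fun q => F (q, c)) ((fderiv ℝ F (p, c)).comp (.inl ℝ E ℝ)) p :=
    hF.hasFDerivAt.comp p (hasFDerivAt_prodMk_left p c)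
  rw [h.fderiv]
  rfl

theorem deriv_prodMk_right {F : E × ℝ → G} {p : E} {c : ℝ}
    (hF : DifferentiableAt ℝ F (p, c)) :
    deriv (fun m => F (p, m)) c = fderiv ℝ F (p, c) (0, 1) :=
  (hF.hasFDerivAt.comp c (hasFDerivAt_prodMk_right p c)).hasDerivAt.deriv

theorem ContinuousLinearMap.map_prodMk_eq_add_smul (T : E × ℝ →L[ℝ] G) (v : E) (s : ℝ) :
    T (v, s) = T (v, 0) + s • T (0, 1) := by
  rw [← T.map_smul, ← T.map_add, Prod.smul_mk, Prod.mk_add_mk, smul_zero, add_zero,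
    smul_eq_mul, mul_one, zero_add]

variable {M F : E × ℝ → G} {W : E × ℝ → ℝ} {p : E} {w : ℝ}

theorem hasFDerivAt_sharing (hM : DifferentiableAt ℝ M (p, W (p, w)))
    (hF : DifferentiableAt ℝ F (p, w - W (p, w))) (hW : DifferentiableAt ℝ W (p, w)) :
    HasFDerivAt (fun z => M (z.1, W z) + F (z.1, z.2 - W z))
      ((fderiv ℝ M (p, W (p, w))).comp
          ((ContinuousLinearMap.fst ℝ E ℝ).prod (fderiv ℝ W (p, w))) +
        (fderiv ℝ F (p, w - W (p, w))).comp
          ((ContinuousLinearMap.fst ℝ E ℝ).prod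
            (ContinuousLinearMap.snd ℝ E ℝ - fderiv ℝ W (p, w)))) (p, w) :=
  (hM.hasFDerivAt.comp (p, w) (hasFDerivAt_fst.prodMk hW.hasFDerivAt)).add
    (hF.hasFDerivAt.comp (p, w)
      (hasFDerivAt_fst.prodMk (hasFDerivAt_snd.sub hW.hasFDerivAt)))

theorem fderiv_sharing_left_apply (hM : DifferentiableAt ℝ M (p, W (p, w)))
    (hF : DifferentiableAt ℝ F (p, w - W (p, w))) (hW : DifferentiableAt ℝ W (p, w)) (v : E) :
    fderiv ℝ (fun q => M (q, W (q, w)) + F (q, w - W (q, w))) p v =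
      fderiv ℝ (fun q => M (q, W (p, w))) p v +
        fderiv ℝ (fun q => W (q, w)) p v • deriv (fun m => M (p, m)) (W (p, w)) +
      fderiv ℝ (fun q => F (q, w - W (p, w))) p v -
        fderiv ℝ (fun q => W (q, w)) p v • deriv (fun m => F (p, m)) (w - W (p, w)) := by
  have hH := hasFDerivAt_sharing hM hF hW
  rw [fderiv_prodMk_left_apply hH.differentiableAt, hH.fderiv, fderiv_prodMk_left_apply hM,
    fderiv_prodMk_left_apply hF, fderiv_prodMk_left_apply hW, deriv_prodMk_right hM,
    deriv_prodMk_right hF]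
  simp only [add_apply, ContinuousLinearMap.comp_apply,
    ContinuousLinearMap.prod_apply, ContinuousLinearMap.coe_fst', sub_apply,
    ContinuousLinearMap.coe_snd']
  rw [ContinuousLinearMap.map_prodMk_eq_add_smul _ v (fderiv ℝ W (p, w) (v, 0)),
    ContinuousLinearMap.map_prodMk_eq_add_smul _ v (0 - fderiv ℝ W (p, w) (v, 0))]
  module

theorem deriv_sharing_right (hM : DifferentiableAt ℝ M (p, W (p, w)))
    (hF : DifferentiableAt ℝ F (p, w - W (p, w))) (hW : DifferentiableAt ℝ W (p, w)) :
    deriv (fun m => M (p, W (p, m)) + F (p, m - W (p, m))) w =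
      deriv (fun m => W (p, m)) w • deriv (fun m => M (p, m)) (W (p, w)) +
        (1 - deriv (fun m => W (p, m)) w) • deriv (fun m => F (p, m)) (w - W (p, w)) := by
  have hH := hasFDerivAt_sharing hM hF hW
  rw [deriv_prodMk_right hH.differentiableAt, hH.fderiv, deriv_prodMk_right hM,
    deriv_prodMk_right hF, deriv_prodMk_right hW]
  simp only [add_apply, ContinuousLinearMap.comp_apply,
    ContinuousLinearMap.prod_apply, ContinuousLinearMap.coe_fst', sub_apply,
    ContinuousLinearMap.coe_snd']
  rw [ContinuousLinearMap.map_prodMk_eq_add_smul _ 0 (fderiv ℝ W (p, w) (0, 1)),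
    ContinuousLinearMap.map_prodMk_eq_add_smul _ 0 (1 - fderiv ℝ W (p, w) (0, 1)),
    Prod.mk_zero_zero, map_zero, map_zero]
  module

end SharingRule

section HouseholdDemand

variable {L : ℕ} {x xm xf : (Fin L → ℝ) → ℝ → (Fin L → ℝ)} {wm : (Fin L → ℝ) → ℝ → ℝ}

theorem priceDeriv_of_sharing
    (hdm : ∀ i, Differentiable ℝ (fun z : (Fin L → ℝ) × ℝ => xm z.1 z.2 i))
    (hdf : ∀ i, Differentiable ℝ (fun z : (Fin L → ℝ) × ℝ => xf z.1 z.2 i))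
    (hdw : Differentiable ℝ (fun z : (Fin L → ℝ) × ℝ => wm z.1 z.2))
    (hx : ∀ p w, x p w = xm p (wm p w) + xf p (w - wm p w)) (p : Fin L → ℝ) (w : ℝ)
    (i j : Fin L) :
    priceDeriv x p w i j =
      priceDeriv xm p (wm p w) i j + priceGrad wm p w j * incomeDeriv xm p (wm p w) i +
        priceDeriv xf p (w - wm p w) i j -
        priceGrad wm p w j * incomeDeriv xf p (w - wm p w) i := by
  have hxi : (fun q => x q w i) = fun q => xm q (wm q w) i + xf q (w - wm q w) i :=
    funext fun q => by rw [hx]; rfl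
  rw [priceDeriv, hxi]
  exact fderiv_sharing_left_apply (M := fun z => xm z.1 z.2 i) (F := fun z => xf z.1 z.2 i)
    (W := fun z => wm z.1 z.2) (hdm i _) (hdf i _) (hdw _) _

theorem incomeDeriv_of_sharing
    (hdm : ∀ i, Differentiable ℝ (fun z : (Fin L → ℝ) × ℝ => xm z.1 z.2 i))
    (hdf : ∀ i, Differentiable ℝ (fun z : (Fin L → ℝ) × ℝ => xf z.1 z.2 i))
    (hdw : Differentiable ℝ (fun z : (Fin L → ℝ) × ℝ => wm z.1 z.2))
    (hx : ∀ p w, x p w = xm p (wm p w) + xf p (w - wm p w)) (p : Fin L → ℝ) (w : ℝ)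
    (i : Fin L) :
    incomeDeriv x p w i =
      incomeGrad wm p w * incomeDeriv xm p (wm p w) i +
        (1 - incomeGrad wm p w) * incomeDeriv xf p (w - wm p w) i := by
  have hxi : (fun m => x p m i) = fun m => xm p (wm p m) i + xf p (m - wm p m) i :=
    funext fun m => by rw [hx]; rfl
  rw [incomeDeriv, hxi]
  exact deriv_sharing_right (M := fun z => xm z.1 z.2 i) (F := fun z => xf z.1 z.2 i)
    (W := fun z => wm z.1 z.2) (hdm i _) (hdf i _) (hdw _)

theorem slutsky_apply_of_sharing
    (hdm : ∀ i, Differentiable ℝ (fun z : (Fin L → ℝ) × ℝ => xm z.1 z.2 i))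
    (hdf : ∀ i, Differentiable ℝ (fun z : (Fin L → ℝ) × ℝ => xf z.1 z.2 i))
    (hdw : Differentiable ℝ (fun z : (Fin L → ℝ) × ℝ => wm z.1 z.2))
    (hx : ∀ p w, x p w = xm p (wm p w) + xf p (w - wm p w)) (p : Fin L → ℝ) (w : ℝ)
    (i j : Fin L) :
    slutsky x p w i j =
      slutsky xm p (wm p w) i j + slutsky xf p (w - wm p w) i j +
      (incomeDeriv xm p (wm p w) i - incomeDeriv xf p (w - wm p w) i) *
        (priceGrad wm p w j + incomeGrad wm p w * xf p (w - wm p w) j -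
          (1 - incomeGrad wm p w) * xm p (wm p w) j) := by
  rw [slutsky, slutsky, slutsky, priceDeriv_of_sharing hdm hdf hdw hx,
    incomeDeriv_of_sharing hdm hdf hdw hx, hx p w, Pi.add_apply]
  ring

end HouseholdDemand

/-- for `x(p,w) = x^m(p, w^m(p,w)) + x^f(p, w − w^m(p,w))` with
everything differentiable, the household pseudo-Slutsky matrix decomposes as
`S̄ = S̄^m + S̄^f + U Vᵀ`; in particular `S̄ − (S̄^m + S̄^f)` has rank at most
one. -/
theorem slutsky_decomposition {L : ℕ}
    (x xm xf : (Fin L → ℝ) → ℝ → (Fin L → ℝ))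
    (wm : (Fin L → ℝ) → ℝ → ℝ)
    (hdm : ∀ i, Differentiable ℝ (fun z : (Fin L → ℝ) × ℝ => xm z.1 z.2 i))
    (hdf : ∀ i, Differentiable ℝ (fun z : (Fin L → ℝ) × ℝ => xf z.1 z.2 i))
    (hdw : Differentiable ℝ (fun z : (Fin L → ℝ) × ℝ => wm z.1 z.2))
    (hx : ∀ p w, x p w = xm p (wm p w) + xf p (w - wm p w))
    (p : Fin L → ℝ) (w : ℝ) :
    (∀ i j, slutsky x p w i j =
      slutsky xm p (wm p w) i j + slutsky xf p (w - wm p w) i j +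
      (incomeDeriv xm p (wm p w) i - incomeDeriv xf p (w - wm p w) i) *
        (priceGrad wm p w j + incomeGrad wm p w * xf p (w - wm p w) j -
          (1 - incomeGrad wm p w) * xm p (wm p w) j)) ∧
    Matrix.rank
      (slutsky x p w - slutsky xm p (wm p w) - slutsky xf p (w - wm p w))
        ≤ 1 := by
  have hentry := slutsky_apply_of_sharing hdm hdf hdw hx p w
  refine ⟨hentry, ?_⟩
  have hdiff : slutsky x p w - slutsky xm p (wm p w) - slutsky xf p (w - wm p w) =
      Matrix.vecMulVec (incomeDeriv xm p (wm p w) - incomeDeriv xf p (w - wm p w))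
        (priceGrad wm p w + incomeGrad wm p w • xf p (w - wm p w) -
          (1 - incomeGrad wm p w) • xm p (wm p w)) := by
    ext i j
    rw [Matrix.sub_apply, Matrix.sub_apply, hentry, Matrix.vecMulVec_apply]
    simp only [Pi.sub_apply, Pi.add_apply, Pi.smul_apply, smul_eq_mul]
    ring
  rw [hdiff]
  exact Matrix.rank_vecMulVec_le _ _
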